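/- arXiv:2511.02348 — 8 statements merged into one kernel-verified Lean document; each statement's English description precedes it below -/
import Mathlib

section
/- Cut elimination holds for the fragment L(/→): every sequent provable in L(/→) with the Cut rule is provable without Cut. -/
/-- slash-only types over primitives `P`. `div β α` denotes `β/α`. -/
inductive Tp (P : Type) : Type
  | pr : P → Tp P
  | div : Tp P → Tp P → Tp P

open Tp

/-- The calculus L(/→) with Cut: Axiom, rule (/→), Cut. -/
inductive Der {P : Type} : List (Tp P) → Tp P → Prop
  | ax (α : Tp P) : Der [α] α
  | slash {Γ Δ Θ : List (Tp P)} {α β γ : Tp P} :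
      Der Γ α → Der (Δ ++ β :: Θ) γ → Der (Δ ++ div β α :: (Γ ++ Θ)) γ
  | cut {Γ Θ Δ : List (Tp P)} {α β : Tp P} :
      Der (Γ ++ α :: Θ) β → Der Δ α → Der (Γ ++ (Δ ++ Θ)) β

/-- Cut-free L(/→): only Axiom and (/→). -/
inductive DerCF {P : Type} : List (Tp P) → Tp P → Prop
  | ax (α : Tp P) : DerCF [α] α
  | slash {Γ Δ Θ : List (Tp P)} {α β γ : Tp P} :
      DerCF Γ α → DerCF (Δ ++ β :: Θ) γ → DerCF (Δ ++ div β α :: (Γ ++ Θ)) γ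

/-- `mk δ [β₁, ..., βₙ] = (⋯((δ/βₙ)/βₙ₋₁)/⋯)/β₁`. -/
def mk {P : Type} (δ : Tp P) : List (Tp P) → Tp P
  | [] => δ
  | b :: bs => div (mk δ bs) b

/-- Degree: number of occurrences of `/`. -/
def deg {P : Type} : Tp P → ℕ
  | pr _ => 0
  | div a b => deg a + deg b + 1


/-- Cut admissibility in the cut-free calculus. Since (/→) is a left rule,
the cut formula is never principal in the right premise except for axioms. -/
lemma cutCF {P : Type} {Δ : List (Tp P)} {α : Tp P} (h2 : DerCF Δ α) :
    ∀ Γ Θ β, DerCF (Γ ++ α :: Θ) β → DerCF (Γ ++ (Δ ++ Θ)) β := by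
  induction h2 with
  | ax a => intro Γ Θ β h1; simpa using h1
  | slash D E ihD ihE =>
    intro Γ Θ β h1
    rename_i G Δ' T a b γ
    have h := ihE Γ Θ β h1
    have h' : DerCF ((Γ ++ Δ') ++ b :: (T ++ Θ)) β := by
      simpa using h
    have := DerCF.slash D h'
    simpa using this

/-- Cut elimination for L(/→). -/
theorem cut_elimination_L_slash {P : Type} (Γ : List (Tp P)) (α : Tp P)
    (h : Der Γ α) : DerCF Γ α := by
  induction h with
  | ax a => exact DerCF.ax a
  | slash D E ihD ihE => exact DerCF.slash ihD ihE
  | cut h1 h2 ih1 ih2 => exact cutCF ih2 _ _ _ ih1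
end

section
/- Cut elimination holds for the fragment L(/→, \→): every sequent provable with Cut is provable without Cut. -/
/-- Types over primitives `P` with `/` and `\`. `div β α` is `β/α`; `bsl α β` is `α\β`. -/
inductive Tp2 (P : Type) : Type
  | pr : P → Tp2 P
  | div : Tp2 P → Tp2 P → Tp2 P
  | bsl : Tp2 P → Tp2 P → Tp2 P

open Tp2

/-- The calculus L(/→, \→) with Cut. -/
inductive Der2 {P : Type} : List (Tp2 P) → Tp2 P → Prop
  | ax (α : Tp2 P) : Der2 [α] α
  | slash {Γ Δ Θ : List (Tp2 P)} {α β γ : Tp2 P} :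
      Der2 Γ α → Der2 (Δ ++ β :: Θ) γ → Der2 (Δ ++ div β α :: (Γ ++ Θ)) γ
  | bslash {Γ Δ Θ : List (Tp2 P)} {α β γ : Tp2 P} :
      Der2 Γ α → Der2 (Δ ++ β :: Θ) γ → Der2 (Δ ++ (Γ ++ bsl α β :: Θ)) γ
  | cut {Γ Θ Δ : List (Tp2 P)} {α β : Tp2 P} :
      Der2 (Γ ++ α :: Θ) β → Der2 Δ α → Der2 (Γ ++ (Δ ++ Θ)) β

/-- Cut-free L(/→, \→). -/
inductive DerCF2 {P : Type} : List (Tp2 P) → Tp2 P → Prop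
  | ax (α : Tp2 P) : DerCF2 [α] α
  | slash {Γ Δ Θ : List (Tp2 P)} {α β γ : Tp2 P} :
      DerCF2 Γ α → DerCF2 (Δ ++ β :: Θ) γ → DerCF2 (Δ ++ div β α :: (Γ ++ Θ)) γ
  | bslash {Γ Δ Θ : List (Tp2 P)} {α β γ : Tp2 P} :
      DerCF2 Γ α → DerCF2 (Δ ++ β :: Θ) γ → DerCF2 (Δ ++ (Γ ++ bsl α β :: Θ)) γ

/-- Degree: number of occurrences of connectives. -/
def deg2 {P : Type} : Tp2 P → ℕ
  | pr _ => 0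
  | div a b => deg2 a + deg2 b + 1
  | bsl a b => deg2 a + deg2 b + 1

lemma cut_adm {P : Type} {Δ : List (Tp2 P)} {α : Tp2 P} (h2 : DerCF2 Δ α) :
    ∀ (Γ Θ : List (Tp2 P)) (β : Tp2 P), DerCF2 (Γ ++ α :: Θ) β → DerCF2 (Γ ++ (Δ ++ Θ)) β := by
  induction h2 with
  | ax a => intro Γ Θ β h1; simpa using h1
  | slash g e ihg ihe =>
    rename_i Γ' Δ' Θ' α' β' γ'
    intro Γ Θ β h1
    have h := ihe Γ Θ β h1
    have h' : DerCF2 ((Γ ++ Δ') ++ β' :: (Θ' ++ Θ)) β := by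
      simpa [List.append_assoc] using h
    have := DerCF2.slash g h'
    simpa [List.append_assoc] using this
  | bslash g e ihg ihe =>
    rename_i Γ' Δ' Θ' α' β' γ'
    intro Γ Θ β h1
    have h := ihe Γ Θ β h1
    have h' : DerCF2 ((Γ ++ Δ') ++ β' :: (Θ' ++ Θ)) β := by
      simpa [List.append_assoc] using h
    have := DerCF2.bslash g h'
    simpa [List.append_assoc] using this

/-- Cut elimination for L(/→, \→). -/
theorem cut_elimination_L_slash_bslash {P : Type} (Γ : List (Tp2 P)) (α : Tp2 P)
    (h : Der2 Γ α) : DerCF2 Γ α := by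
  induction h with
  | ax a => exact DerCF2.ax a
  | slash g e ihg ihe => exact DerCF2.slash ihg ihe
  | bslash g e ihg ihe => exact DerCF2.bslash ihg ihe
  | cut h1 h2 ih1 ih2 => exact cut_adm ih2 _ _ _ ih1
end

section
/- (Reducibility condition) For a nonempty sequence Γ of / -only types and a primitive type S, the sequent Γ → S is provable in L(/→) if and only if Γ decomposes as α, Δ₁, ..., Δₙ where α = (⋯((S/βₙ)/βₙ₋₁)/⋯)/β₁ for some types β₁,...,βₙ (n ≥ 0), and for each 1 ≤ k ≤ n, the sequent Δₖ → βₖ is provable in L(/→). -/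
open Tp

lemma mk_append {P : Type} (δ : Tp P) (l₁ l₂ : List (Tp P)) :
    mk δ (l₁ ++ l₂) = mk (mk δ l₂) l₁ := by
  induction l₁ with
  | nil => rfl
  | cons a t ih => simp [mk, ih]

/-- Split a flatten at an element. -/
lemma flatten_split {α : Type*} : ∀ (Ds : List (List α)) (X Y : List α) (b : α),
    Ds.flatten = X ++ b :: Y →
    ∃ Ds₁ u v Ds₂, Ds = Ds₁ ++ (u ++ b :: v) :: Ds₂ ∧
      X = Ds₁.flatten ++ u ∧ Y = v ++ Ds₂.flatten := by
  intro Ds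
  induction Ds with
  | nil => intro X Y b h; simp at h
  | cons D Ds ih =>
    intro X Y b h
    simp only [List.flatten_cons] at h
    rcases List.append_eq_append_iff.mp h with ⟨a', hX, ha⟩ | ⟨c', hD, hc⟩
    · obtain ⟨Ds₁, u, v, Ds₂, h1, h2, h3⟩ := ih a' Y b ha
      exact ⟨D :: Ds₁, u, v, Ds₂, by simp [h1], by simp [hX, h2], h3⟩
    · cases c' with
      | nil =>
        simp at hc
        obtain ⟨Ds₁, u, v, Ds₂, h1, h2, h3⟩ := ih [] Y b hc.symm
        refine ⟨D :: Ds₁, u, v, Ds₂, by simp [h1], ?_, h3⟩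
        simp at hD
        simp [hD, ← h2]
      | cons hd tl =>
        obtain ⟨rfl, hY⟩ : b = hd ∧ Y = tl ++ Ds.flatten := by
          simpa using hc
        exact ⟨[], X, tl, Ds, by simp [hD], by simp, hY⟩

lemma len_split {α β : Type*} : ∀ (a₁ : List β) (x : β) (a₂ : List β) (l : List α),
    l.length = (a₁ ++ x :: a₂).length →
    ∃ l₁ y l₂, l = l₁ ++ y :: l₂ ∧ l₁.length = a₁.length ∧ l₂.length = a₂.length := by
  intro a₁
  induction a₁ with
  | nil =>
    intro x a₂ l h
    cases l with
    | nil => simp at h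
    | cons y t => exact ⟨[], y, t, rfl, rfl, by simpa using h⟩
  | cons c a₁ ih =>
    intro x a₂ l h
    cases l with
    | nil => simp at h
    | cons y t =>
      obtain ⟨l₁, z, l₂, h1, h2, h3⟩ := ih x a₂ t (by simpa using h)
      exact ⟨y :: l₁, z, l₂, by simp [h1], by simp [h2], h3⟩

lemma forward_dir {P : Type} {Γ : List (Tp P)} {γ : Tp P} (h : Der Γ γ) :
    ∃ (bs : List (Tp P)) (Ds : List (List (Tp P))),
      Ds.length = bs.length ∧ Γ = mk γ bs :: Ds.flatten ∧
      ∀ p ∈ Ds.zip bs, Der p.1 p.2 := by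
  induction h with
  | ax α => exact ⟨[], [], rfl, rfl, by simp⟩
  | @slash Γ' Δ Θ α β γ h1 h2 ih1 ih2 =>
    obtain ⟨bs, Ds, hlen, heq, hall⟩ := ih2
    cases Δ with
    | nil =>
      obtain ⟨rfl, rfl⟩ : β = mk γ bs ∧ Θ = Ds.flatten := by
        simpa using heq
      refine ⟨α :: bs, Γ' :: Ds, by simp [hlen], by simp [mk], ?_⟩
      intro p hp
      simp only [List.zip_cons_cons, List.mem_cons] at hp
      rcases hp with rfl | hp
      · exact h1
      · exact hall p hp
    | cons d Δ' =>
      obtain ⟨rfl, hrest⟩ : d = mk γ bs ∧ Δ' ++ β :: Θ = Ds.flatten := by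
        simpa using heq
      obtain ⟨Ds₁, u, v, Ds₂, hDs, hX, hY⟩ := flatten_split Ds Δ' Θ β hrest.symm
      obtain ⟨bs₁, c, bs₂, hbs, hl1, hl2⟩ := len_split Ds₁ (u ++ β :: v) Ds₂ bs
        (by rw [← hlen, hDs])
      have hzip : Ds.zip bs = Ds₁.zip bs₁ ++ ((u ++ β :: v), c) :: Ds₂.zip bs₂ := by
        rw [hDs, hbs, List.zip_append hl1.symm]; simp
      have hDc : Der (u ++ β :: v) c := hall ((u ++ β :: v), c) (by rw [hzip]; simp)
      have hnew : Der (u ++ div β α :: (Γ' ++ v)) c := Der.slash h1 hDc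
      refine ⟨bs, Ds₁ ++ (u ++ div β α :: (Γ' ++ v)) :: Ds₂, ?_, ?_, ?_⟩
      · rw [hbs]; simp [hl1, hl2]
      · simp only [List.cons_append, List.flatten_append, List.flatten_cons]
        rw [hX, hY]
        simp
      · intro p hp
        rw [hbs, List.zip_append hl1.symm] at hp
        simp only [List.zip_cons_cons, List.mem_append, List.mem_cons] at hp
        rcases hp with hp | rfl | hp
        · exact hall p (by rw [hzip]; simp [hp])
        · exact hnew
        · exact hall p (by rw [hzip]; simp [hp])
  | @cut Γ₀ Θ Δ α γ h1 h2 ih1 ih2 =>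
    obtain ⟨bs, Ds, hlen, heq, hall⟩ := ih1
    cases Γ₀ with
    | nil =>
      obtain ⟨rfl, rfl⟩ : α = mk γ bs ∧ Θ = Ds.flatten := by
        simpa using heq
      obtain ⟨bs', Ds', hlen', heq', hall'⟩ := ih2
      refine ⟨bs' ++ bs, Ds' ++ Ds, by simp [hlen, hlen'], ?_, ?_⟩
      · rw [mk_append]
        simp [heq']
      · intro p hp
        rw [List.zip_append hlen'] at hp
        rcases List.mem_append.mp hp with hp | hp
        · exact hall' p hp
        · exact hall p hp
    | cons d Γ₀' =>
      obtain ⟨rfl, hrest⟩ : d = mk γ bs ∧ Γ₀' ++ α :: Θ = Ds.flatten := by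
        simpa using heq
      obtain ⟨Ds₁, u, v, Ds₂, hDs, hX, hY⟩ := flatten_split Ds Γ₀' Θ α hrest.symm
      obtain ⟨bs₁, c, bs₂, hbs, hl1, hl2⟩ := len_split Ds₁ (u ++ α :: v) Ds₂ bs
        (by rw [← hlen, hDs])
      have hzip : Ds.zip bs = Ds₁.zip bs₁ ++ ((u ++ α :: v), c) :: Ds₂.zip bs₂ := by
        rw [hDs, hbs, List.zip_append hl1.symm]; simp
      have hDc : Der (u ++ α :: v) c := hall ((u ++ α :: v), c) (by rw [hzip]; simp)
      have hnew : Der (u ++ (Δ ++ v)) c := Der.cut hDc h2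
      refine ⟨bs, Ds₁ ++ (u ++ (Δ ++ v)) :: Ds₂, ?_, ?_, ?_⟩
      · rw [hbs]; simp [hl1, hl2]
      · simp only [List.cons_append, List.flatten_append, List.flatten_cons]
        rw [hX, hY]
        simp
      · intro p hp
        rw [hbs, List.zip_append hl1.symm] at hp
        simp only [List.zip_cons_cons, List.mem_append, List.mem_cons] at hp
        rcases hp with hp | rfl | hp
        · exact hall p (by rw [hzip]; simp [hp])
        · exact hnew
        · exact hall p (by rw [hzip]; simp [hp])

lemma backward_dir {P : Type} (δ : Tp P) : ∀ (bs : List (Tp P)) (Ds : List (List (Tp P))),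
    Ds.length = bs.length → (∀ p ∈ Ds.zip bs, Der p.1 p.2) →
    Der (mk δ bs :: Ds.flatten) δ := by
  intro bs
  induction bs with
  | nil =>
    intro Ds hlen _
    obtain rfl := List.length_eq_zero_iff.mp (by simpa using hlen)
    exact Der.ax δ
  | cons b bs ih =>
    intro Ds hlen hall
    cases Ds with
    | nil => simp at hlen
    | cons D Ds =>
      have h1 : Der D b := hall (D, b) (by simp)
      have h2 : Der (mk δ bs :: Ds.flatten) δ :=
        ih Ds (by simpa using hlen) (fun p hp => hall p (by simp [hp]))
      have := Der.slash (Δ := []) h1 h2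
      simpa [mk] using this

/-- Reducibility condition for a primitive succedent `S`. -/
theorem reducibility_condition {P : Type} (S : P) (Γ : List (Tp P)) (hne : Γ ≠ []) :
    Der Γ (pr S) ↔
      ∃ (bs : List (Tp P)) (Ds : List (List (Tp P))),
        Ds.length = bs.length ∧
        Γ = mk (pr S) bs :: Ds.flatten ∧
        ∀ p ∈ Ds.zip bs, Der p.1 p.2 := by
  constructor
  · exact forward_dir
  · rintro ⟨bs, Ds, hlen, rfl, hall⟩
    exact backward_dir (pr S) bs Ds hlen hall
end

section
/- In L(/→), if Γ → A is provable where A is a primitive type and Γ is nonempty, then the leftmost type of Γ is of the form (⋯((A/βₙ)/⋯)/β₁ for some n ≥ 0 (in particular, its 'head' primitive type is A). -/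
open Tp

/-- Head primitive type of a slash-only type. -/
def headPr {P : Type} : Tp P → P
  | pr A => A
  | div a _ => headPr a

lemma exists_mk {P : Type} (α : Tp P) : ∃ bs : List (Tp P), α = mk (pr (headPr α)) bs := by
  induction α with
  | pr A => exact ⟨[], rfl⟩
  | div a b iha ihb =>
    obtain ⟨bs, hbs⟩ := iha
    exact ⟨b :: bs, by simp [mk, headPr, ← hbs]⟩

lemma der_head {P : Type} {Γ : List (Tp P)} {γ : Tp P} (h : Der Γ γ) :
    ∃ α Γ', Γ = α :: Γ' ∧ headPr α = headPr γ := by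
  induction h with
  | ax α => exact ⟨α, [], rfl, rfl⟩
  | @slash Γ Δ Θ α β γ h1 h2 ih1 ih2 =>
    cases Δ with
    | nil =>
      obtain ⟨a, G, heq, hhd⟩ := ih2
      simp only [List.nil_append] at heq ⊢
      cases heq
      exact ⟨div β α, Γ ++ Θ, rfl, by simpa [headPr] using hhd⟩
    | cons d Δ' =>
      obtain ⟨a, G, heq, hhd⟩ := ih2
      simp only [List.cons_append] at heq ⊢
      cases heq
      exact ⟨d, Δ' ++ div β α :: (Γ ++ Θ), rfl, hhd⟩
  | @cut Γ Θ Δ α β h1 h2 ih1 ih2 =>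
    cases Γ with
    | nil =>
      obtain ⟨a, G, heq, hhd⟩ := ih1
      simp only [List.nil_append] at heq ⊢
      cases heq
      obtain ⟨a', G', heq', hhd'⟩ := ih2
      cases heq'
      exact ⟨a', G' ++ Θ, by simp, hhd'.trans hhd⟩
    | cons g Γ' =>
      obtain ⟨a, G, heq, hhd⟩ := ih1
      simp only [List.cons_append] at heq ⊢
      cases heq
      exact ⟨g, Γ' ++ (Δ ++ Θ), rfl, hhd⟩

/-- If `Γ → A` is provable with `A` primitive, the leftmost type of `Γ` has the form
`(⋯((A/βₙ)/⋯)/β₁`; in particular its head primitive type is `A`. -/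
theorem leftmost_head {P : Type} (A : P) (α : Tp P) (Γ : List (Tp P))
    (h : Der (α :: Γ) (pr A)) :
    (∃ bs : List (Tp P), α = mk (pr A) bs) ∧ headPr α = A := by
  have hh : headPr α = A := by
    have := der_head h
    obtain ⟨α', Γ', heq, hhd⟩ := this
    cases heq; simpa [headPr] using hhd
  exact ⟨hh ▸ exists_mk α, hh⟩
end

section
/- Every ε-free regular language is recognised by an L(/→)-grammar with types of degree at most 1, obtained by setting A/B ∈ f(a) iff A → aB is a production and A ∈ f(a) iff A → a is a production. -/
open Tp

/-- A Lambek grammar over slash-only types: primitive types `P`, alphabet `V`,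
distinguished primitive type `S`, finite type assignment `f`. -/
structure LGrammar (P V : Type) where
  S : P
  f : V → Set (Tp P)
  fin : ∀ a : V, (f a).Finite

/-- The language recognised by a Lambek grammar. -/
def LGrammar.Lang {P V : Type} (G : LGrammar P V) : Set (List V) :=
  {w | ∃ Γ : List (Tp P), List.Forall₂ (fun a α => α ∈ G.f a) w Γ ∧ Der Γ (pr G.S)}

/-- A right-regular grammar: productions `A → aB` (`rule`) and `A → a` (`term`). -/
structure RegGrammar (N T : Type) where
  S : N
  rule : N → T → N → Prop
  term : N → T → Prop

/-- Generation relation of a right-regular grammar. -/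
inductive RegGen {N T : Type} (G : RegGrammar N T) : N → List T → Prop
  | term {A : N} {a : T} : G.term A a → RegGen G A [a]
  | step {A B : N} {a : T} {w : List T} : G.rule A a B → RegGen G B w → RegGen G A (a :: w)

/-- The language generated by a right-regular grammar. -/
def RegGrammar.Lang {N T : Type} (G : RegGrammar N T) : Set (List T) :=
  {w | RegGen G G.S w}

/-!
L(/→) is sound for its language model, in which a sequent `Γ → γ` holds when the concatenation
of the denotations of `Γ` is contained in that of `γ`, and `β/α` denotes the right residual
`{x | x · ⟦α⟧ ⊆ ⟦β⟧}`. Interpreting a primitive `A` as the language generated from the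
nonterminal `A`, every type assigned to `a` contains `[a]` (for `A/B` this is the production
`A → aB`), so every recognised word is generated from `S`. Conversely, a derivation
`A ⇒ a₁B₁ ⇒ a₁a₂B₂ ⇒ ⋯ ⇒ a₁⋯aₙ` is mirrored by the types `A/B₁, B₁/B₂, …, Bₙ₋₁`, which reduce
to `A` by repeated (/→).
-/

def Tp.interp {P V : Type} (v : P → Language V) : Tp P → Language V
  | pr A => v A
  | div β α => {x | ∀ y ∈ α.interp v, x ++ y ∈ β.interp v}

section Soundness

variable {P V : Type} (v : P → Language V)

theorem Tp.interp_div_mul_le (β α : Tp P) :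
    (div β α).interp v * α.interp v ≤ β.interp v := by
  rintro _ ⟨x, hx, y, hy, rfl⟩
  exact hx y hy

theorem Der.prod_interp_le {Γ : List (Tp P)} {γ : Tp P} (h : Der Γ γ) :
    (Γ.map (Tp.interp v)).prod ≤ γ.interp v := by
  induction h with
  | ax α => simp
  | @slash Γ Δ Θ α β γ _ _ ihΓ ihΔ =>
    calc ((Δ ++ div β α :: (Γ ++ Θ)).map (Tp.interp v)).prod
        = (Δ.map (Tp.interp v)).prod * ((div β α).interp v * (Γ.map (Tp.interp v)).prod) *
            (Θ.map (Tp.interp v)).prod := by simp [mul_assoc]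
      _ ≤ (Δ.map (Tp.interp v)).prod * β.interp v * (Θ.map (Tp.interp v)).prod := by
        gcongr
        exact (mul_le_mul_right ihΓ _).trans (Tp.interp_div_mul_le v β α)
      _ = ((Δ ++ β :: Θ).map (Tp.interp v)).prod := by simp [mul_assoc]
      _ ≤ γ.interp v := ihΔ
  | @cut Γ Θ Δ α β _ _ ihΓ ihΔ =>
    calc ((Γ ++ (Δ ++ Θ)).map (Tp.interp v)).prod
        = (Γ.map (Tp.interp v)).prod * (Δ.map (Tp.interp v)).prod *
            (Θ.map (Tp.interp v)).prod := by simp [mul_assoc]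
      _ ≤ (Γ.map (Tp.interp v)).prod * α.interp v * (Θ.map (Tp.interp v)).prod := by gcongr
      _ = ((Γ ++ α :: Θ).map (Tp.interp v)).prod := by simp [mul_assoc]
      _ ≤ β.interp v := ihΓ

theorem Language.mem_prod_of_forall₂ {w : List V} {Ls : List (Language V)}
    (h : List.Forall₂ (fun a L => [a] ∈ L) w Ls) : w ∈ Ls.prod := by
  induction h with
  | nil => exact Language.nil_mem_one
  | cons ha _ ih => exact Language.append_mem_mul ha ih

theorem LGrammar.lang_subset_interp (LG : LGrammar P V)
    (hf : ∀ a, ∀ α ∈ LG.f a, [a] ∈ α.interp v) : LG.Lang ⊆ v LG.S := by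
  rintro w ⟨Γ, hΓ, hd⟩
  refine hd.prod_interp_le v (Language.mem_prod_of_forall₂ ?_)
  rw [List.forall₂_map_right_iff]
  exact hΓ.imp hf

end Soundness

theorem Der.div_cons {P : Type} {Γ : List (Tp P)} {α : Tp P} (h : Der Γ α) (β : Tp P) :
    Der (div β α :: Γ) β := by
  simpa using Der.slash (Δ := []) (Θ := []) h (Der.ax β)

theorem RegGen.exists_forall₂_der {N T : Type} {G : RegGrammar N T} (LG : LGrammar N T)
    (hrule : ∀ A a B, G.rule A a B → div (pr A) (pr B) ∈ LG.f a)
    (hterm : ∀ A a, G.term A a → pr A ∈ LG.f a) {A : N} {w : List T} (h : RegGen G A w) :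
    ∃ Γ, List.Forall₂ (fun a α => α ∈ LG.f a) w Γ ∧ Der Γ (pr A) := by
  induction h with
  | @term A a ht => exact ⟨[pr A], .cons (hterm A a ht) .nil, .ax _⟩
  | @step A B a w hr _ ih =>
    obtain ⟨Γ, hΓ, hd⟩ := ih
    exact ⟨div (pr A) (pr B) :: Γ, .cons (hrule A a B hr) hΓ, hd.div_cons _⟩

theorem regular_to_lambek_general {N T : Type} (G : RegGrammar N T)
    (LG : LGrammar N T) (hS : LG.S = G.S)
    (hf : ∀ a : T, LG.f a =
      {α | (∃ A B : N, G.rule A a B ∧ α = div (pr A) (pr B)) ∨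
           (∃ A : N, G.term A a ∧ α = pr A)}) :
    LG.Lang = G.Lang := by
  apply Set.Subset.antisymm
  · have hsound : ∀ a, ∀ α ∈ LG.f a, [a] ∈ α.interp fun A => {w | RegGen G A w} := by
      intro a α hα
      rw [hf a] at hα
      obtain ⟨A, B, hr, rfl⟩ | ⟨A, ht, rfl⟩ := hα
      · exact fun _ => RegGen.step hr
      · exact RegGen.term ht
    have hsub := LG.lang_subset_interp _ hsound
    rwa [hS] at hsub
  · intro w hw
    obtain ⟨Γ, hΓ, hd⟩ := RegGen.exists_forall₂_der LG
      (fun A a B hr => by rw [hf a]; exact .inl ⟨A, B, hr, rfl⟩)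
      (fun A a ht => by rw [hf a]; exact .inr ⟨A, ht, rfl⟩) hw
    exact ⟨Γ, hΓ, hS ▸ hd⟩

/-- Every ε-free regular language is recognised by the L(/→)-grammar with degree-≤1 types
obtained by setting `A/B ∈ f a` iff `A → aB` and `A ∈ f a` iff `A → a`. -/
theorem regular_to_lambek {N T : Type} [Finite N] [Finite T] (G : RegGrammar N T)
    (LG : LGrammar N T) (hS : LG.S = G.S)
    (hf : ∀ a : T, LG.f a =
      {α | (∃ A B : N, G.rule A a B ∧ α = div (pr A) (pr B)) ∨
           (∃ A : N, G.term A a ∧ α = pr A)}) :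
    LG.Lang = G.Lang :=
  regular_to_lambek_general G LG hS hf
end

section
/- Every language recognised by an L(/→, \→)-grammar with types of degree at most 1 is a linear context-free language. -/
open Tp2

/-- A Lambek grammar over types with `/` and `\`. -/
structure LGrammar2 (P V : Type) where
  S : P
  f : V → Set (Tp2 P)
  fin : ∀ a : V, (f a).Finite

/-- The language recognised by an L(/→, \→)-grammar. -/
def LGrammar2.Lang {P V : Type} (G : LGrammar2 P V) : Set (List V) :=
  {w | ∃ Γ : List (Tp2 P), List.Forall₂ (fun a α => α ∈ G.f a) w Γ ∧ Der2 Γ (pr G.S)}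

/-- A linear context-free grammar: productions `A → aB`, `A → Ba`, `A → a`. -/
structure LinGrammar (N T : Type) where
  S : N
  rule_r : N → T → N → Prop
  rule_l : N → N → T → Prop
  term : N → T → Prop

/-- Generation relation of a linear context-free grammar. -/
inductive LinGen {N T : Type} (G : LinGrammar N T) : N → List T → Prop
  | term {A : N} {a : T} : G.term A a → LinGen G A [a]
  | right {A B : N} {a : T} {w : List T} : G.rule_r A a B → LinGen G B w → LinGen G A (a :: w)
  | left {A B : N} {a : T} {w : List T} : G.rule_l A B a → LinGen G B w → LinGen G A (w ++ [a])

/-- The language generated by a linear context-free grammar. -/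
def LinGrammar.Lang {N T : Type} (G : LinGrammar N T) : Set (List T) :=
  {w | LinGen G G.S w}

namespace DegOne

variable {P : Type}

/-- Linear parse structures: `Good p Γ` means `Γ` reduces to `p` by a linear chain of
single-argument applications. -/
inductive Good : P → List (Tp2 P) → Prop
  | base (p : P) : Good p [pr p]
  | right {p q : P} {Γ : List (Tp2 P)} :
      Good q Γ → Good p (div (pr p) (pr q) :: Γ)
  | left {p q : P} {Γ : List (Tp2 P)} :
      Good q Γ → Good p (Γ ++ [bsl (pr q) (pr p)])

/-- Canonical residuated interpretation of types as sets of type-lists. -/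
def M : Tp2 P → Set (List (Tp2 P))
  | pr p => {Γ | Good p Γ}
  | div β α => {Γ | ∀ Δ ∈ M α, Γ ++ Δ ∈ M β}
  | bsl α β => {Γ | ∀ Δ ∈ M α, Δ ++ Γ ∈ M β}

lemma forall₂_split {A B : Type} {R : A → B → Prop} :
    ∀ {l₁ l₂ : List A} {u : List B}, List.Forall₂ R (l₁ ++ l₂) u →
      ∃ u₁ u₂, u = u₁ ++ u₂ ∧ List.Forall₂ R l₁ u₁ ∧ List.Forall₂ R l₂ u₂ := by
  intro l₁
  induction l₁ with
  | nil => exact fun h => ⟨[], _, rfl, List.Forall₂.nil, h⟩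
  | cons a l ih =>
    intro l₂ u h
    rcases List.forall₂_cons_left_iff.mp h with ⟨b, u', hab, h', rfl⟩
    rcases ih h' with ⟨u₁, u₂, rfl, h₁, h₂⟩
    exact ⟨b :: u₁, u₂, rfl, List.Forall₂.cons hab h₁, h₂⟩

lemma forall₂_split_right {A B : Type} {R : A → B → Prop} :
    ∀ {l₁ l₂ : List B} {u : List A}, List.Forall₂ R u (l₁ ++ l₂) →
      ∃ u₁ u₂, u = u₁ ++ u₂ ∧ List.Forall₂ R u₁ l₁ ∧ List.Forall₂ R u₂ l₂ := by
  intro l₁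
  induction l₁ with
  | nil => exact fun h => ⟨[], _, rfl, List.Forall₂.nil, h⟩
  | cons a l ih =>
    intro l₂ u h
    rcases List.forall₂_cons_right_iff.mp h with ⟨b, u', hab, h', rfl⟩
    rcases ih h' with ⟨u₁, u₂, rfl, h₁, h₂⟩
    exact ⟨b :: u₁, u₂, rfl, List.Forall₂.cons hab h₁, h₂⟩

lemma flatten_middle {A : Type} (a : List (List A)) (x : List A) (b : List (List A)) :
    (a ++ x :: b).flatten = a.flatten ++ (x ++ b.flatten) := by simp

/-- Soundness of `Der2` in the canonical interpretation. -/
lemma sound {Γ : List (Tp2 P)} {γ : Tp2 P} (h : Der2 Γ γ) :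
    ∀ Δs : List (List (Tp2 P)), List.Forall₂ (fun α Δ => Δ ∈ M α) Γ Δs →
      Δs.flatten ∈ M γ := by
  induction h with
  | ax α =>
    intro Δs h
    rcases List.forall₂_cons_left_iff.mp h with ⟨Δ, u, hΔ, hu, rfl⟩
    rcases List.forall₂_nil_left_iff.mp hu
    simpa using hΔ
  | @slash Γ Δ Θ α β γ h1 h2 ih1 ih2 =>
    intro Δs hf
    rcases forall₂_split hf with ⟨Ds, u, rfl, hDs, hu⟩
    rcases List.forall₂_cons_left_iff.mp hu with ⟨E, u', hE, hu', rfl⟩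
    rcases forall₂_split hu' with ⟨Gs, Ts, rfl, hGs, hTs⟩
    have hβ : E ++ Gs.flatten ∈ M β := hE _ (ih1 Gs hGs)
    have h2' := ih2 (Ds ++ (E ++ Gs.flatten) :: Ts)
      (List.rel_append hDs (List.Forall₂.cons hβ hTs))
    rw [flatten_middle] at h2' ⊢
    simpa [List.append_assoc] using h2'
  | @bslash Γ Δ Θ α β γ h1 h2 ih1 ih2 =>
    intro Δs hf
    rcases forall₂_split hf with ⟨Ds, u, rfl, hDs, hu⟩
    rcases forall₂_split hu with ⟨Gs, u', rfl, hGs, hu'⟩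
    rcases List.forall₂_cons_left_iff.mp hu' with ⟨E, Ts, hE, hTs, rfl⟩
    have hβ : Gs.flatten ++ E ∈ M β := hE _ (ih1 Gs hGs)
    have h2' := ih2 (Ds ++ (Gs.flatten ++ E) :: Ts)
      (List.rel_append hDs (List.Forall₂.cons hβ hTs))
    rw [flatten_middle] at h2'
    simpa [List.append_assoc] using h2'
  | @cut Γ Θ Δ α β h1 h2 ih1 ih2 =>
    intro Δs hf
    rcases forall₂_split hf with ⟨Gs, u, rfl, hGs, hu⟩
    rcases forall₂_split hu with ⟨Ds, Ts, rfl, hDs, hTs⟩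
    have hα : Ds.flatten ∈ M α := ih2 Ds hDs
    have h1' := ih1 (Gs ++ Ds.flatten :: Ts)
      (List.rel_append hGs (List.Forall₂.cons hα hTs))
    rw [flatten_middle] at h1'
    simpa [List.append_assoc] using h1'

lemma deg2_eq_zero {α : Tp2 P} (h : deg2 α = 0) : ∃ p, α = pr p := by
  cases α with
  | pr p => exact ⟨p, rfl⟩
  | div a b => simp [deg2] at h
  | bsl a b => simp [deg2] at h

lemma singleton_mem_M {α : Tp2 P} (h : deg2 α ≤ 1) : [α] ∈ M α := by
  cases α with
  | pr p => exact Good.base p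
  | div β a =>
    simp only [deg2] at h
    obtain ⟨p, rfl⟩ := deg2_eq_zero (α := β) (by omega)
    obtain ⟨q, rfl⟩ := deg2_eq_zero (α := a) (by omega)
    intro Δ hΔ
    exact Good.right hΔ
  | bsl a β =>
    simp only [deg2] at h
    obtain ⟨q, rfl⟩ := deg2_eq_zero (α := a) (by omega)
    obtain ⟨p, rfl⟩ := deg2_eq_zero (α := β) (by omega)
    intro Δ hΔ
    exact Good.left hΔ

lemma good_der {p : P} {Γ : List (Tp2 P)} (h : Good p Γ) : Der2 Γ (pr p) := by
  induction h with
  | base p => exact Der2.ax _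
  | @right p q Γ h ih =>
    simpa using Der2.slash (Δ := []) (Θ := []) ih (Der2.ax (pr p))
  | @left p q Γ h ih =>
    simpa using Der2.bslash (Δ := []) (Θ := []) ih (Der2.ax (pr p))

lemma flatten_map_singleton {A : Type} : ∀ l : List A, (l.map (fun x => [x])).flatten = l
  | [] => rfl
  | a :: l => by simp [flatten_map_singleton l]

lemma forall₂_mem_right {A B : Type} {R : A → B → Prop} :
    ∀ {w : List A} {Γ : List B}, List.Forall₂ R w Γ → ∀ b ∈ Γ, ∃ a, R a b := by
  intro w Γ h
  induction h with
  | nil => simp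
  | cons h t ih =>
    intro b hb
    rcases List.mem_cons.mp hb with rfl | hb
    · exact ⟨_, h⟩
    · exact ih b hb

end DegOne

open DegOne

/-- Every language recognised by an L(/→, \→)-grammar with types of degree ≤ 1 is a linear
context-free language. -/
theorem degree_one_lambek_linear {P V : Type} [Finite P] [Finite V] (G : LGrammar2 P V)
    (hdeg : ∀ a : V, ∀ α ∈ G.f a, deg2 α ≤ 1) :
    ∃ (N : Type) (_ : Finite N) (G' : LinGrammar N V), G'.Lang = G.Lang := by
  classical
  refine ⟨P, ‹Finite P›, ⟨G.S,
      fun p a q => div (pr p) (pr q) ∈ G.f a,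
      fun p q a => bsl (pr q) (pr p) ∈ G.f a,
      fun p a => pr p ∈ G.f a⟩, ?_⟩
  set G' : LinGrammar P V := ⟨G.S,
      fun p a q => div (pr p) (pr q) ∈ G.f a,
      fun p q a => bsl (pr q) (pr p) ∈ G.f a,
      fun p a => pr p ∈ G.f a⟩ with hG'
  have lemA : ∀ {p : P} {w : List V}, LinGen G' p w →
      ∃ Γ, List.Forall₂ (fun a α => α ∈ G.f a) w Γ ∧ Good p Γ := by
    intro p w h
    induction h with
    | @term A a h => exact ⟨[pr A], List.Forall₂.cons h List.Forall₂.nil, Good.base A⟩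
    | @right A B a w h hg ih =>
      obtain ⟨Γ, hf, hgood⟩ := ih
      exact ⟨div (pr A) (pr B) :: Γ, List.Forall₂.cons h hf, Good.right hgood⟩
    | @left A B a w h hg ih =>
      obtain ⟨Γ, hf, hgood⟩ := ih
      exact ⟨Γ ++ [bsl (pr B) (pr A)],
        List.rel_append hf (List.Forall₂.cons h List.Forall₂.nil), Good.left hgood⟩
  have lemB : ∀ {p : P} {Γ : List (Tp2 P)}, Good p Γ →
      ∀ w : List V, List.Forall₂ (fun a α => α ∈ G.f a) w Γ → LinGen G' p w := by
    intro p Γ h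
    induction h with
    | base p =>
      intro w hw
      rcases List.forall₂_cons_right_iff.mp hw with ⟨a, w', ha, hw', rfl⟩
      rcases List.forall₂_nil_right_iff.mp hw'
      exact LinGen.term ha
    | @right p q Γ h ih =>
      intro w hw
      rcases List.forall₂_cons_right_iff.mp hw with ⟨a, w', ha, hw', rfl⟩
      exact LinGen.right ha (ih w' hw')
    | @left p q Γ h ih =>
      intro w hw
      rcases forall₂_split_right hw with ⟨w₁, w₂, rfl, hw₁, hw₂⟩
      rcases List.forall₂_cons_right_iff.mp hw₂ with ⟨a, w', ha, hw', rfl⟩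
      rcases List.forall₂_nil_right_iff.mp hw'
      exact LinGen.left ha (ih w₁ hw₁)
  ext w
  constructor
  · intro hw
    obtain ⟨Γ, hf, hg⟩ := lemA hw
    exact ⟨Γ, hf, good_der hg⟩
  · rintro ⟨Γ, hf, hd⟩
    have hdegΓ : ∀ α ∈ Γ, deg2 α ≤ 1 := by
      intro α hα
      obtain ⟨a, ha⟩ := forall₂_mem_right hf α hα
      exact hdeg a α ha
    have hmap : List.Forall₂ (fun α Δ => Δ ∈ M α) Γ (Γ.map (fun α => [α])) := by
      rw [List.forall₂_map_right_iff]
      exact List.forall₂_same.mpr fun α hα => singleton_mem_M (hdegΓ α hα)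
    have hs := sound hd _ hmap
    rw [flatten_map_singleton] at hs
    exact lemB hs w hf
end

section
/- L(/→, \→)-grammars with types restricted to degree at most 1 recognise exactly the ε-free linear context-free languages. -/
open Tp2

/-! Cut is admissible in the cut-free calculus, so only cut-free derivations matter; from
antecedent types of degree ≤ 1 these apply (/→) and (\→) to primitive types only. Reading `b/c` as
the production `b → · c`, `c\b` as `b → c ·` and `b` as `b → ·`, the derivable sequents `Γ → p` are
then exactly the words `Γ` generated from `p` by a linear grammar over types: a rule application
plugs a word generated from `b` into the unique primitive occurrence `b` of a generated word.
Pulling this grammar back along the lexicon gives a linear grammar for the Lambek grammar, and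
every linear grammar arises from its own degree ≤ 1 lexicon in this way. -/

theorem DerCF2.cut {P : Type} {Δ : List (Tp2 P)} {α : Tp2 P} (h : DerCF2 Δ α)
    {Γ Θ : List (Tp2 P)} {β : Tp2 P} (h' : DerCF2 (Γ ++ α :: Θ) β) :
    DerCF2 (Γ ++ (Δ ++ Θ)) β := by
  induction h generalizing Γ Θ β with
  | ax => simpa using h'
  | slash d₁ _ _ ih₂ =>
    have := DerCF2.slash d₁ (Δ := Γ ++ _) (Θ := _ ++ Θ) (by simpa using ih₂ h')
    simpa using this
  | bslash d₁ _ _ ih₂ =>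
    have := DerCF2.bslash d₁ (Δ := Γ ++ _) (Θ := _ ++ Θ) (by simpa using ih₂ h')
    simpa using this

theorem Der2.toDerCF2 {P : Type} {Γ : List (Tp2 P)} {γ : Tp2 P} (h : Der2 Γ γ) : DerCF2 Γ γ := by
  induction h with
  | ax α => exact .ax α
  | slash _ _ ih₁ ih₂ => exact .slash ih₁ ih₂
  | bslash _ _ ih₁ ih₂ => exact .bslash ih₁ ih₂
  | cut _ _ ih₁ ih₂ => exact ih₂.cut ih₁

def LinGrammar.comap {N T V : Type} (G : LinGrammar N T) (r : V → T → Prop) : LinGrammar N V where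
  S := G.S
  rule_r A a B := ∃ t, r a t ∧ G.rule_r A t B
  rule_l A B a := ∃ t, r a t ∧ G.rule_l A B t
  term A a := ∃ t, r a t ∧ G.term A t

namespace LinGen

variable {N T : Type} {G : LinGrammar N T}

theorem exists_term_forall_replace {x : T} (hr : ∀ A B, ¬ G.rule_r A x B)
    (hl : ∀ A B, ¬ G.rule_l A B x) {A : N} {Δ Θ : List T} (h : LinGen G A (Δ ++ x :: Θ)) :
    ∃ C, G.term C x ∧ ∀ w, LinGen G C w → LinGen G A (Δ ++ w ++ Θ) := by
  generalize hu : Δ ++ x :: Θ = u at h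
  induction h generalizing Δ Θ with
  | @term A a ha =>
    obtain ⟨rfl, rfl, rfl⟩ : Δ = [] ∧ x = a ∧ Θ = [] := by
      simpa [List.append_eq_singleton_iff] using hu
    exact ⟨A, ha, fun w hw ↦ by simpa using hw⟩
  | @right A B a u hAB _ ih =>
    obtain _ | ⟨a', Δ⟩ := Δ
    · obtain rfl : x = a := List.cons.inj hu |>.1
      exact absurd hAB (hr A B)
    · obtain ⟨rfl, hu'⟩ := List.cons.inj hu
      obtain ⟨C, hC, hrepl⟩ := ih hu'
      exact ⟨C, hC, fun w hw ↦ .right hAB (hrepl w hw)⟩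
  | @left A B a u hAB _ ih =>
    obtain rfl | ⟨Θ, b, rfl⟩ := Θ.eq_nil_or_concat
    · obtain rfl : x = a := by simpa using (List.append_inj' hu rfl).2
      exact absurd hAB (hl A B)
    · have hsplit : (Δ ++ x :: Θ) ++ [b] = u ++ [a] := by simpa using hu
      obtain ⟨hu', hba⟩ := List.append_inj' hsplit rfl
      obtain rfl : b = a := List.singleton_inj.1 hba
      obtain ⟨C, hC, hrepl⟩ := ih hu'
      exact ⟨C, hC, fun w hw ↦ by simpa using LinGen.left hAB (hrepl w hw)⟩


theorem comap_iff {V : Type} {r : V → T → Prop} {A : N} {w : List V} : LinGen (G.comap r) A w ↔ ∃ u, List.Forall₂ r w u ∧ LinGen G A u := by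
  constructor
  · intro h
    induction h with
    | term ha =>
      obtain ⟨t, hat, ht⟩ := ha
      exact ⟨[t], .cons hat .nil, .term ht⟩
    | right ha _ ih =>
      obtain ⟨t, hat, ht⟩ := ha
      obtain ⟨u, hwu, hu⟩ := ih
      exact ⟨t :: u, .cons hat hwu, .right ht hu⟩
    | left ha _ ih =>
      obtain ⟨t, hat, ht⟩ := ha
      obtain ⟨u, hwu, hu⟩ := ih
      exact ⟨u ++ [t], List.rel_append hwu (.cons hat .nil), .left ht hu⟩
  · rintro ⟨u, hwu, h⟩
    induction h generalizing w with
    | term ht =>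
      obtain ⟨a, w, hat, hw, rfl⟩ := List.forall₂_cons_right_iff.1 hwu
      obtain rfl := List.forall₂_nil_right_iff.1 hw
      exact .term ⟨_, hat, ht⟩
    | right ht _ ih =>
      obtain ⟨a, w, hat, hw, rfl⟩ := List.forall₂_cons_right_iff.1 hwu
      exact .right ⟨_, hat, ht⟩ (ih hw)
    | @left A B t u ht _ ih =>
      have hw := List.forall₂_take_append w u [t] hwu
      obtain ⟨a, w', hat, hw', hdrop⟩ :=
        List.forall₂_cons_right_iff.1 (List.forall₂_drop_append w u [t] hwu)
      obtain rfl := List.forall₂_nil_right_iff.1 hw'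
      rw [← List.take_append_drop u.length w, hdrop]
      exact .left ⟨_, hat, ht⟩ (ih hw)

end LinGen

namespace Tp2

variable {P : Type}

theorem exists_eq_pr_of_deg2_eq_zero {t : Tp2 P} (h : deg2 t = 0) : ∃ p, t = pr p := by
  cases t with
  | pr p => exact ⟨p, rfl⟩
  | div | bsl => simp [deg2] at h

def degOneGrammar (S : P) : LinGrammar P (Tp2 P) where
  S := S
  rule_r b t c := t = div (pr b) (pr c)
  rule_l b c t := t = bsl (pr c) (pr b)
  term b t := t = pr b

variable {S : P}

theorem linGen_degOneGrammar_replace {Δ Θ w : List (Tp2 P)} {p b : P}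
    (h : LinGen (degOneGrammar S) p (Δ ++ pr b :: Θ)) (hw : LinGen (degOneGrammar S) b w) :
    LinGen (degOneGrammar S) p (Δ ++ w ++ Θ) := by
  obtain ⟨C, hC, hrepl⟩ := LinGen.exists_term_forall_replace
    (fun _ _ h ↦ by cases h) (fun _ _ h ↦ by cases h) h
  obtain rfl : b = C := pr.inj hC
  exact hrepl w hw

theorem deg2_eq_zero_of_deg2_div_le_one {α β : Tp2 P} (h : deg2 (div β α) ≤ 1) :
    deg2 β = 0 ∧ deg2 α = 0 := by
  simp only [deg2] at h
  omega

theorem deg2_eq_zero_of_deg2_bsl_le_one {α β : Tp2 P} (h : deg2 (bsl α β) ≤ 1) :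
    deg2 α = 0 ∧ deg2 β = 0 := by
  simp only [deg2] at h
  omega

theorem linGen_degOneGrammar_of_derCF2 {Γ : List (Tp2 P)} {p : P} (h : DerCF2 Γ (pr p))
    (hdeg : ∀ t ∈ Γ, deg2 t ≤ 1) : LinGen (degOneGrammar S) p Γ := by
  generalize hγ : pr p = γ at h
  induction h generalizing p with
  | ax => subst hγ; exact .term rfl
  | @slash Γ Δ Θ α β γ _ _ ih₁ ih₂ =>
    simp only [List.mem_append, List.mem_cons, or_imp, forall_and, forall_eq] at hdeg ih₂
    obtain ⟨hΔ, hdiv, hΓ, hΘ⟩ := hdeg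
    obtain ⟨⟨b, rfl⟩, ⟨a, rfl⟩⟩ := (deg2_eq_zero_of_deg2_div_le_one hdiv).imp
      exists_eq_pr_of_deg2_eq_zero exists_eq_pr_of_deg2_eq_zero
    simpa using linGen_degOneGrammar_replace (ih₂ ⟨hΔ, by simp [deg2], hΘ⟩ hγ)
      (.right rfl (ih₁ hΓ rfl))
  | @bslash Γ Δ Θ α β γ _ _ ih₁ ih₂ =>
    simp only [List.mem_append, List.mem_cons, or_imp, forall_and, forall_eq] at hdeg ih₂
    obtain ⟨hΔ, hΓ, hbsl, hΘ⟩ := hdeg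
    obtain ⟨⟨a, rfl⟩, ⟨b, rfl⟩⟩ := (deg2_eq_zero_of_deg2_bsl_le_one hbsl).imp
      exists_eq_pr_of_deg2_eq_zero exists_eq_pr_of_deg2_eq_zero
    simpa using linGen_degOneGrammar_replace (ih₂ ⟨hΔ, by simp [deg2], hΘ⟩ hγ)
      (.left rfl (ih₁ hΓ rfl))

theorem der2_of_linGen_degOneGrammar {Γ : List (Tp2 P)} {p : P}
    (h : LinGen (degOneGrammar S) p Γ) : Der2 Γ (pr p) := by
  induction h with
  | term ht => exact ht ▸ .ax _
  | right ht _ ih =>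
    rw [ht]
    simpa using Der2.slash (Δ := []) (Θ := []) ih (.ax _)
  | left ht _ ih =>
    rw [ht]
    simpa using Der2.bslash (Δ := []) (Θ := []) ih (.ax _)

end Tp2

namespace LGrammar2

variable {P V : Type}

def toLin (G : LGrammar2 P V) : LinGrammar P V :=
  (degOneGrammar G.S).comap fun a α ↦ α ∈ G.f a

theorem lang_eq_toLin_lang (G : LGrammar2 P V) (hdeg : ∀ a : V, ∀ α ∈ G.f a, deg2 α ≤ 1) :
    G.Lang = G.toLin.Lang := by
  ext w
  change _ ↔ LinGen ((degOneGrammar G.S).comap _) G.S w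
  rw [LinGen.comap_iff]
  refine exists_congr fun Γ ↦ and_congr_right fun hwΓ ↦ ⟨fun h ↦ ?_, der2_of_linGen_degOneGrammar⟩
  have hΓ : ∀ t ∈ Γ, deg2 t ≤ 1 :=
    ((List.forall₂_and_left Γ w).1 (hwΓ.flip.imp fun t a ht ↦ ⟨hdeg a t ht, ht⟩)).1
  exact linGen_degOneGrammar_of_derCF2 h.toDerCF2 hΓ

end LGrammar2

namespace LinGrammar

variable {N V : Type} [Finite N]

def toLGrammar2 (G : LinGrammar N V) : LGrammar2 N V where
  S := G.S
  f a := pr '' {b | G.term b a} ∪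
    (fun bc : N × N ↦ div (pr bc.1) (pr bc.2)) '' {bc | G.rule_r bc.1 a bc.2} ∪
    (fun bc : N × N ↦ bsl (pr bc.2) (pr bc.1)) '' {bc | G.rule_l bc.1 bc.2 a}
  fin _ := ((Set.toFinite _).image _ |>.union <| (Set.toFinite _).image _).union <|
    (Set.toFinite _).image _

theorem deg2_le_one_of_mem_toLGrammar2 (G : LinGrammar N V) :
    ∀ a : V, ∀ α ∈ G.toLGrammar2.f a, deg2 α ≤ 1 := by
  rintro a α ((⟨b, -, rfl⟩ | ⟨bc, -, rfl⟩) | ⟨bc, -, rfl⟩) <;> simp [deg2]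

theorem toLGrammar2_toLin (G : LinGrammar N V) : G.toLGrammar2.toLin = G := by
  cases G
  simp [LGrammar2.toLin, toLGrammar2, LinGrammar.comap, degOneGrammar]

end LinGrammar

theorem degree_one_lambek_eq_linear_general {V : Type} (L : Set (List V)) :
    (∃ (P : Type) (_ : Finite P) (G : LGrammar2 P V),
        (∀ a : V, ∀ α ∈ G.f a, deg2 α ≤ 1) ∧ G.Lang = L) ↔
    (∃ (N : Type) (_ : Finite N) (G' : LinGrammar N V), G'.Lang = L) := by
  constructor
  · rintro ⟨P, hP, G, hdeg, rfl⟩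
    exact ⟨P, hP, G.toLin, (G.lang_eq_toLin_lang hdeg).symm⟩
  · rintro ⟨N, hN, G, rfl⟩
    refine ⟨N, hN, G.toLGrammar2, G.deg2_le_one_of_mem_toLGrammar2, ?_⟩
    rw [G.toLGrammar2.lang_eq_toLin_lang G.deg2_le_one_of_mem_toLGrammar2, G.toLGrammar2_toLin]

/-- L(/→, \→)-grammars with types of degree ≤ 1 recognise exactly the ε-free linear
context-free languages. -/
theorem degree_one_lambek_eq_linear {V : Type} [Finite V] (L : Set (List V)) :
    (∃ (P : Type) (_ : Finite P) (G : LGrammar2 P V),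
        (∀ a : V, ∀ α ∈ G.f a, deg2 α ≤ 1) ∧ G.Lang = L) ↔
    (∃ (N : Type) (_ : Finite N) (G' : LinGrammar N V), G'.Lang = L) :=
  degree_one_lambek_eq_linear_general L
end

section
/- Every ε-free context-free language is recognised by an L(/→)-grammar with / -only types: starting from a CFG in Greibach Normal Form, assign A ∈ f(a) for each production A → a, and (⋯((A/Bₙ)/Bₙ₋₁)/⋯)/B₁ ∈ f(a) for each production A → aB₁⋯Bₙ. -/
open Tp

/-! Soundness: interpret types in the language model of the grammar, where `A` denotes the words
derivable from `A` and `β/α` the right residual `{u | ∀ v ∈ ⟦α⟧, u ++ v ∈ ⟦β⟧}`. Every `Der`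
sequent is valid there, and the type that a rule `A → aB₁⋯Bₙ` assigns to `a` contains `[a]`.

Completeness: by induction along a derivation `s ⇒* w`, the word `w` splits into pieces parsed by
the symbols of `s`. A step `A → aB₁⋯Bₙ` is undone by applying the type of `a` to the parses of
`B₁, …, Bₙ` in turn, each application being one use of `(/→)` followed by Cut. -/

section

variable {T P : Type}

theorem Der.app {Γ Δ : List (Tp P)} {α β : Tp P} (h₁ : Der Γ (div β α)) (h₂ : Der Δ α) :
    Der (Γ ++ Δ) β := by
  have happ : Der (div β α :: Δ) β := by
    simpa using Der.slash (Δ := []) (Θ := []) h₂ (Der.ax β)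
  simpa using Der.cut (Γ := []) happ h₁

theorem mk_mul_prod_le {L : Tp P → Language T} (hL : ∀ α β, L (div β α) * L α ≤ L β)
    (δ : Tp P) : ∀ Bs : List (Tp P), L (mk δ Bs) * (Bs.map L).prod ≤ L δ
  | [] => by simp [mk]
  | B :: Bs =>
    calc L (mk δ (B :: Bs)) * ((B :: Bs).map L).prod
        = L (div (mk δ Bs) B) * L B * (Bs.map L).prod := by simp [mk, mul_assoc]
      _ ≤ L (mk δ Bs) * (Bs.map L).prod := by gcongr; exact hL _ _
      _ ≤ L δ := mk_mul_prod_le hL δ Bs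

theorem mem_prod_of_forall₂ {f : T → Set (Tp P)} {L : Tp P → Language T}
    (hL : ∀ a, ∀ α ∈ f a, [a] ∈ L α) {w : List T} {Γ : List (Tp P)}
    (h : List.Forall₂ (fun a α => α ∈ f a) w Γ) : w ∈ (Γ.map L).prod := by
  induction h with
  | nil => exact (Language.mem_one _).2 rfl
  | @cons a α w Γ ha _ ih => exact Language.mem_mul.2 ⟨[a], hL a α ha, w, ih, rfl⟩

section Parses

variable (f : T → Set (Tp P))

def parses (γ : Tp P) : Language T :=
  {w | ∃ Γ, List.Forall₂ (fun a α => α ∈ f a) w Γ ∧ Der Γ γ}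

variable {f}

theorem singleton_mem_parses {a : T} {α : Tp P} (h : α ∈ f a) : [a] ∈ parses f α :=
  ⟨[α], List.Forall₂.cons h List.Forall₂.nil, Der.ax α⟩

theorem parses_div_mul_le (α β : Tp P) : parses f (div β α) * parses f α ≤ parses f β := by
  rintro _ ⟨u, ⟨Γ, hΓ, hu⟩, v, ⟨Δ, hΔ, hv⟩, rfl⟩
  exact ⟨Γ ++ Δ, List.rel_append hΓ hΔ, hu.app hv⟩

end Parses

section LanguageModel

variable {G : ContextFreeGrammar T}

def langModel (G : ContextFreeGrammar T) : Tp G.NT → Language T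
  | pr A => {w | G.Derives [Symbol.nonterminal A] (w.map Symbol.terminal)}
  | div β α => {w | ∀ v ∈ langModel G α, w ++ v ∈ langModel G β}

theorem langModel_div_mul_le (α β : Tp G.NT) :
    langModel G (div β α) * langModel G α ≤ langModel G β := by
  rintro _ ⟨u, hu, v, hv, rfl⟩
  exact hu v hv

theorem Der.prod_langModel_le {Γ : List (Tp G.NT)} {γ : Tp G.NT} (h : Der Γ γ) :
    (Γ.map (langModel G)).prod ≤ langModel G γ := by
  induction h with
  | ax α => simp
  | @slash Γ Δ Θ α β γ _ _ ih₁ ih₂ =>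
    calc ((Δ ++ div β α :: (Γ ++ Θ)).map (langModel G)).prod
        = (Δ.map (langModel G)).prod * (langModel G (div β α) * (Γ.map (langModel G)).prod) *
            (Θ.map (langModel G)).prod := by simp [mul_assoc]
      _ ≤ (Δ.map (langModel G)).prod * langModel G β * (Θ.map (langModel G)).prod := by
        gcongr; exact (mul_le_mul_right ih₁ _).trans (langModel_div_mul_le α β)
      _ ≤ langModel G γ := by simpa [mul_assoc] using ih₂
  | @cut Γ Θ Δ α β _ _ ih₁ ih₂ =>
    calc ((Γ ++ (Δ ++ Θ)).map (langModel G)).prod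
        = (Γ.map (langModel G)).prod * (Δ.map (langModel G)).prod *
            (Θ.map (langModel G)).prod := by simp [mul_assoc]
      _ ≤ (Γ.map (langModel G)).prod * langModel G α * (Θ.map (langModel G)).prod := by gcongr
      _ ≤ langModel G β := by simpa [mul_assoc] using ih₁

theorem mem_langModel_mk_of_derives {A : G.NT} :
    ∀ (Bs : List G.NT) (u : List T),
      G.Derives [Symbol.nonterminal A] (u.map Symbol.terminal ++ Bs.map Symbol.nonterminal) →
      u ∈ langModel G (mk (pr A) (Bs.map pr))
  | [], u, h => by rwa [List.map_nil, List.append_nil] at h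
  | B :: Bs, u, h => fun v (hv : G.Derives _ _) => by
    refine mem_langModel_mk_of_derives Bs (u ++ v) (h.trans ?_)
    simpa using (hv.append_right (Bs.map Symbol.nonterminal)).append_left (u.map Symbol.terminal)

end LanguageModel

def symbolParses {N : Type} (f : T → Set (Tp N)) : Symbol T N → Language T
  | .terminal a => {[a]}
  | .nonterminal B => parses f (pr B)

theorem mem_prod_map_symbolParses_terminal {N : Type} {f : T → Set (Tp N)} :
    ∀ w : List T, w ∈ ((w.map Symbol.terminal).map (symbolParses f)).prod
  | [] => (Language.mem_one _).2 rfl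
  | a :: w => Language.mem_mul.2 ⟨[a], rfl, w, mem_prod_map_symbolParses_terminal w, rfl⟩

theorem mem_prod_map_symbolParses_of_derives {G : ContextFreeGrammar T} {f : T → Set (Tp G.NT)}
    (hGNF : ∀ r ∈ G.rules, ∃ (a : T) (Bs : List G.NT),
      r.output = Symbol.terminal a :: Bs.map Symbol.nonterminal)
    (hf : ∀ r ∈ G.rules, ∀ (a : T) (Bs : List G.NT),
      r.output = Symbol.terminal a :: Bs.map Symbol.nonterminal →
      mk (pr r.input) (Bs.map pr) ∈ f a)
    {s : List (Symbol T G.NT)} {w : List T} (h : G.Derives s (w.map Symbol.terminal)) :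
    w ∈ (s.map (symbolParses f)).prod := by
  induction h using Relation.ReflTransGen.head_induction_on with
  | refl => exact mem_prod_map_symbolParses_terminal w
  | head hp _ ih =>
    obtain ⟨r, hr, hrw⟩ := hp
    obtain ⟨p, q, rfl, rfl⟩ := hrw.exists_parts
    obtain ⟨a, Bs, hout⟩ := hGNF r hr
    have hlex : ({[a]} : Language T) ≤ parses f (mk (pr r.input) (Bs.map pr)) := by
      rintro _ rfl
      exact singleton_mem_parses (hf r hr a Bs hout)
    have hrule : symbolParses f (.terminal a) *
        ((Bs.map Symbol.nonterminal).map (symbolParses f)).prod ≤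
        symbolParses f (.nonterminal r.input) := by
      simpa [symbolParses, Function.comp_def] using
        (mul_le_mul_left hlex _).trans (mk_mul_prod_le parses_div_mul_le _ (Bs.map pr))
    rw [hout] at ih
    simp only [List.map_append, List.prod_append, List.map_cons, List.prod_cons,
      List.map_nil, List.prod_nil, mul_one] at ih ⊢
    exact mul_le_mul_left (mul_le_mul_right hrule _) _ ih

end

/-- Every ε-free context-free language (given by a grammar in Greibach Normal Form) is
recognised by the L(/→)-grammar assigning `A ∈ f a` for `A → a` and
`(⋯((A/Bₙ)/⋯)/B₁ ∈ f a` for `A → aB₁⋯Bₙ`. -/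
theorem gnf_to_lambek {T : Type} (G : ContextFreeGrammar T)
    (hGNF : ∀ r ∈ G.rules, ∃ (a : T) (Bs : List G.NT),
      r.output = Symbol.terminal a :: Bs.map Symbol.nonterminal)
    (LG : LGrammar G.NT T) (hS : LG.S = G.initial)
    (hf : ∀ a : T, LG.f a =
      {α | ∃ r ∈ G.rules, ∃ Bs : List G.NT,
        r.output = Symbol.terminal a :: Bs.map Symbol.nonterminal ∧
        α = mk (pr r.input) (Bs.map pr)}) :
    LG.Lang = G.language := by
  have hLang : LG.Lang = parses LG.f (pr G.initial) := by rw [← hS]; rfl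
  rw [hLang]
  apply le_antisymm
  · rintro w ⟨Γ, hΓ, hder⟩
    refine hder.prod_langModel_le (mem_prod_of_forall₂ (fun a α hα => ?_) hΓ)
    obtain ⟨r, hr, Bs, hout, rfl⟩ := (hf a).le hα
    refine mem_langModel_mk_of_derives Bs [a] (ContextFreeGrammar.Produces.single ⟨r, hr, ?_⟩)
    simpa [hout] using ContextFreeRule.Rewrites.input_output (r := r)
  · intro w hw
    have hparse := mem_prod_map_symbolParses_of_derives hGNF
      (fun r hr a Bs hout => (hf a).ge ⟨r, hr, Bs, hout, rfl⟩) hw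
    simp only [List.map_cons, List.map_nil, List.prod_cons, List.prod_nil, mul_one] at hparse
    exact hparse
end
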